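/- arXiv:1504.04569 — 5 statements merged into one kernel-verified Lean document; each statement's English description precedes it below -/
import Mathlib

section
/- For a complex unital Banach algebra A and any element a in A, the algebra numerical range V(a) equals the intersection over all complex z of the closed disks centered at z with radius ||a - z·1||. -/
/-!
Every state is a norm-one functional fixing `1`, so `|f a - z| = |f (a - z)| ≤ ‖a - z‖`. Conversely,
if `w` lies in every disk, then `‖α + β w‖ ≤ ‖α + β a‖` for all `α, β` (for `β ≠ 0` this is the disk
condition at `z = -α / β`, scaled by `|β|`). Hence `α + β a ↦ α + β w` is a well-defined functional of
norm at most one on `span {1, a}`, and a Hahn–Banach extension of it is a state taking the value `w`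
at `a`.
-/

/-- Algebra numerical range of an element of a complex unital Banach algebra,
defined via states: `V(a) = {f a : f ∈ A*, ‖f‖ = 1 = f 1}`. -/
def numRange (A : Type*) [NormedRing A] [NormedAlgebra ℂ A] (a : A) : Set ℂ :=
  {z | ∃ f : A →L[ℂ] ℂ, ‖f‖ = 1 ∧ f 1 = 1 ∧ f a = z}

section DominatedFunctional

variable {𝕜 M E : Type*} [RCLike 𝕜] [AddCommGroup M] [Module 𝕜 M]
  [NormedAddCommGroup E] [NormedSpace 𝕜 E]

theorem exists_strongDual_comp_eq_of_norm_le (T : M →ₗ[𝕜] E) (φ : M →ₗ[𝕜] 𝕜)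
    (hφ : ∀ x, ‖φ x‖ ≤ ‖T x‖) : ∃ g : StrongDual 𝕜 E, ‖g‖ ≤ 1 ∧ ∀ x, g (T x) = φ x := by
  have hker : LinearMap.ker T ≤ LinearMap.ker φ := fun x hx ↦ by
    have := hφ x
    rw [LinearMap.mem_ker.1 hx, norm_zero] at this
    exact LinearMap.mem_ker.2 (norm_le_zero_iff.1 this)
  let ψ : LinearMap.range T →ₗ[𝕜] 𝕜 :=
    (LinearMap.ker T).liftQ φ hker ∘ₗ T.quotKerEquivRange.symm.toLinearMap
  have hψ : ∀ x, ψ ⟨T x, LinearMap.mem_range_self T x⟩ = φ x := fun x ↦ by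
    simp only [ψ, LinearMap.comp_apply, LinearEquiv.coe_coe,
      LinearMap.quotKerEquivRange_symm_apply_image, Submodule.mkQ_apply, Submodule.liftQ_apply]
  have hψ_le : ∀ y, ‖ψ y‖ ≤ 1 * ‖y‖ := by
    rintro ⟨_, x, rfl⟩
    rw [one_mul, hψ]
    exact hφ x
  obtain ⟨g, hg_ext, hg_norm⟩ := exists_extension_norm_eq _ (ψ.mkContinuous 1 hψ_le)
  refine ⟨g, hg_norm ▸ LinearMap.mkContinuous_norm_le ψ zero_le_one hψ_le, fun x ↦ ?_⟩
  exact (hg_ext ⟨T x, LinearMap.mem_range_self T x⟩).trans (hψ x)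

end DominatedFunctional

section NumRange

variable {A : Type*} [NormedRing A] [NormedAlgebra ℂ A]

theorem numRange_subset_closedBall (a : A) (z : ℂ) :
    numRange A a ⊆ Metric.closedBall z ‖a - algebraMap ℂ A z‖ := by
  rintro _ ⟨f, hf, hf1, rfl⟩
  have hf_sub : f a - z = f (a - algebraMap ℂ A z) := by
    simp [Algebra.algebraMap_eq_smul_one, hf1]
  rw [Metric.mem_closedBall, dist_eq_norm, hf_sub]
  simpa [hf] using f.le_opNorm (a - algebraMap ℂ A z)

theorem norm_add_mul_le_of_mem_iInter_closedBall [NormOneClass A] {a : A} {w : ℂ}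
    (hw : w ∈ ⋂ z : ℂ, Metric.closedBall z ‖a - algebraMap ℂ A z‖) (α β : ℂ) :
    ‖α + β * w‖ ≤ ‖α • (1 : A) + β • a‖ := by
  rcases eq_or_ne β 0 with rfl | hβ
  · simp [norm_smul]
  have hz := Set.mem_iInter.1 hw (-α / β)
  rw [Metric.mem_closedBall, dist_eq_norm] at hz
  have hβα : β * (-α / β) = -α := mul_div_cancel₀ _ hβ
  calc ‖α + β * w‖ = ‖β‖ * ‖w - -α / β‖ := by
        rw [← norm_mul, mul_sub, hβα, sub_neg_eq_add, add_comm]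
    _ ≤ ‖β‖ * ‖a - algebraMap ℂ A (-α / β)‖ := by gcongr
    _ = ‖α • (1 : A) + β • a‖ := by
        rw [← norm_smul, Algebra.algebraMap_eq_smul_one, smul_sub, smul_smul, hβα, neg_smul,
          sub_neg_eq_add, add_comm]

theorem mem_numRange_of_mem_iInter_closedBall [NormOneClass A] {a : A} {w : ℂ}
    (hw : w ∈ ⋂ z : ℂ, Metric.closedBall z ‖a - algebraMap ℂ A z‖) : w ∈ numRange A a := by
  let T : ℂ × ℂ →ₗ[ℂ] A :=
    (LinearMap.toSpanSingleton ℂ A 1).coprod (LinearMap.toSpanSingleton ℂ A a)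
  let φ : ℂ × ℂ →ₗ[ℂ] ℂ :=
    (LinearMap.toSpanSingleton ℂ ℂ 1).coprod (LinearMap.toSpanSingleton ℂ ℂ w)
  obtain ⟨g, hg_le, hg⟩ := exists_strongDual_comp_eq_of_norm_le T φ fun p ↦ by
    simpa [T, φ] using norm_add_mul_le_of_mem_iInter_closedBall hw p.1 p.2
  have hg1 : g 1 = 1 := by simpa [T, φ] using hg (1, 0)
  have hga : g a = w := by simpa [T, φ] using hg (0, 1)
  have hg_ge : 1 ≤ ‖g‖ := by simpa [hg1] using g.le_opNorm 1
  exact ⟨g, le_antisymm hg_le hg_ge, hg1, hga⟩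

end NumRange

theorem stmt0_general (A : Type*) [NormedRing A] [NormedAlgebra ℂ A]
    [NormOneClass A] (a : A) :
    numRange A a =
      ⋂ z : ℂ, Metric.closedBall z ‖a - algebraMap ℂ A z‖ :=
  (Set.subset_iInter (numRange_subset_closedBall a)).antisymm
    fun _ hw ↦ mem_numRange_of_mem_iInter_closedBall hw

theorem stmt0 (A : Type*) [NormedRing A] [NormedAlgebra ℂ A] [CompleteSpace A]
    [NormOneClass A] (a : A) :
    numRange A a =
      ⋂ z : ℂ, Metric.closedBall z ‖a - algebraMap ℂ A z‖ :=
  stmt0_general A a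
end

section
/- Let A be a complex unital Banach algebra and a = (a₁,...,a_k), b = (b₁,...,b_k) two k-tuples of elements of A. Let R_{a,b} be the elementary operator x ↦ Σᵢ aᵢxbᵢ on A. Then for every unitary u ∈ A (invertible with ||u|| = ||u⁻¹|| = 1), the numerical range V(Σᵢ u⁻¹aᵢubᵢ, A) is contained in the numerical range V(R_{a,b}, B(A)) of R_{a,b} as an element of the Banach algebra of bounded operators on A. -/
/-!
For a unitary `u`, the map `T ↦ u⁻¹ * T u` from `B(A)` to `A` is unital and contractive, so
precomposing a state of `A` with it gives a state of `B(A)`. It sends `R_{a,b}` to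
`∑ᵢ u⁻¹ aᵢ u bᵢ`.
-/

theorem numRange_map_subset {A B : Type*} [NormedRing A] [NormedAlgebra ℂ A]
    [NormedRing B] [NormedAlgebra ℂ B] [NormOneClass B]
    (Φ : B →L[ℂ] A) (hΦ : ‖Φ‖ ≤ 1) (hΦ1 : Φ 1 = 1) (b : B) :
    numRange A (Φ b) ⊆ numRange B b := by
  rintro z ⟨f, hf, hf1, rfl⟩
  have hF1 : (f.comp Φ) 1 = 1 := by simp [hΦ1, hf1]
  have hF_le : ‖f.comp Φ‖ ≤ 1 :=
    calc ‖f.comp Φ‖ ≤ ‖f‖ * ‖Φ‖ := f.opNorm_comp_le Φ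
      _ ≤ 1 := by rw [hf]; linarith
  have hF_ge : 1 ≤ ‖f.comp Φ‖ := by
    simpa [hF1] using (f.comp Φ).le_opNorm 1
  exact ⟨f.comp Φ, le_antisymm hF_le hF_ge, hF1, rfl⟩

namespace Units

variable {𝕜 A : Type*} [NontriviallyNormedField 𝕜] [NormedRing A] [NormedAlgebra 𝕜 A]

noncomputable def conjEval (u : Aˣ) : (A →L[𝕜] A) →L[𝕜] A :=
  (ContinuousLinearMap.mul 𝕜 A ↑u⁻¹).comp (ContinuousLinearMap.apply 𝕜 A (u : A))

@[simp]
theorem conjEval_apply (u : Aˣ) (T : A →L[𝕜] A) : conjEval u T = ↑u⁻¹ * T u := rfl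

theorem conjEval_one (u : Aˣ) : conjEval (𝕜 := 𝕜) u 1 = 1 := by
  simp

theorem norm_conjEval_le (u : Aˣ) : ‖conjEval (𝕜 := 𝕜) u‖ ≤ ‖(↑u⁻¹ : A)‖ * ‖(u : A)‖ := by
  refine ContinuousLinearMap.opNorm_le_bound _ (by positivity) fun T => ?_
  calc ‖↑u⁻¹ * T u‖ ≤ ‖(↑u⁻¹ : A)‖ * (‖T‖ * ‖(u : A)‖) :=
        (norm_mul_le _ _).trans (by gcongr; exact T.le_opNorm _)
    _ = ‖(↑u⁻¹ : A)‖ * ‖(u : A)‖ * ‖T‖ := by ring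

theorem conjEval_elementary (u : Aˣ) {k : ℕ} (a b : Fin k → A) (R : A →L[𝕜] A)
    (hR : ∀ x, R x = ∑ i, a i * x * b i) :
    conjEval u R = ∑ i, ↑u⁻¹ * a i * u * b i := by
  simp only [conjEval_apply, hR, Finset.mul_sum, mul_assoc]

end Units

theorem stmt3_general (A : Type*) [NormedRing A] [NormedAlgebra ℂ A]
    [NormOneClass A] (k : ℕ) (a b : Fin k → A) (R : A →L[ℂ] A)
    (hR : ∀ x, R x = ∑ i, a i * x * b i)
    (u : Aˣ) (hu : ‖(u : A)‖ = 1) (hu' : ‖((u⁻¹ : Aˣ) : A)‖ = 1) :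
    numRange A (∑ i, ((u⁻¹ : Aˣ) : A) * a i * u * b i)
      ⊆ numRange (A →L[ℂ] A) R := by
  have : Nontrivial A := NormOneClass.nontrivial
  have hΦ : ‖Units.conjEval (𝕜 := ℂ) u‖ ≤ 1 := by
    simpa [hu, hu'] using Units.norm_conjEval_le (𝕜 := ℂ) u
  rw [← Units.conjEval_elementary u a b R hR]
  exact numRange_map_subset _ hΦ (Units.conjEval_one u) R

theorem stmt3 (A : Type*) [NormedRing A] [NormedAlgebra ℂ A] [CompleteSpace A]
    [NormOneClass A] (k : ℕ) (a b : Fin k → A) (R : A →L[ℂ] A)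
    (hR : ∀ x, R x = ∑ i, a i * x * b i)
    (u : Aˣ) (hu : ‖(u : A)‖ = 1) (hu' : ‖((u⁻¹ : Aˣ) : A)‖ = 1) :
    numRange A (∑ i, ((u⁻¹ : Aˣ) : A) * a i * u * b i)
      ⊆ numRange (A →L[ℂ] A) R :=
  stmt3_general A k a b R hR u hu hu'
end

section
/- Let E be a complex Banach space, π : B(E) → B(E)/K(E) the quotient onto the Calkin algebra, and A = (A₁,...,A_k), B = (B₁,...,B_k) two k-tuples in B(E). Then for every U ∈ B(E) whose image π(U) is unitary in the Calkin algebra, the essential numerical range V_e(Σᵢ U⁻¹AᵢUBᵢ) is contained in the numerical range of the elementary operator R_{π(A),π(B)} on the Calkin algebra. -/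
theorem nontrivial_of_mem_numRange {A : Type*} [NormedRing A] [NormedAlgebra ℂ A] {a : A}
    {z : ℂ} (hz : z ∈ numRange A a) : Nontrivial A := by
  obtain ⟨f, -, hf1, -⟩ := hz
  refine ⟨⟨1, 0, fun h => ?_⟩⟩
  simp [h] at hf1

theorem numRange_apply_subset {A B : Type*} [NormedRing A] [NormedAlgebra ℂ A] [NormOneClass A]
    [NormedRing B] [NormedAlgebra ℂ B] (Φ : A →L[ℂ] B) (hΦ : ‖Φ‖ ≤ 1) (hΦ1 : Φ 1 = 1) (a : A) :
    numRange B (Φ a) ⊆ numRange A a := by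
  rintro _ ⟨f, hf, hf1, rfl⟩
  have hfΦ1 : (f.comp Φ) 1 = 1 := by simp [hΦ1, hf1]
  refine ⟨f.comp Φ, le_antisymm ?_ ?_, hfΦ1, rfl⟩
  · calc ‖f.comp Φ‖ ≤ ‖f‖ * ‖Φ‖ := f.opNorm_comp_le Φ
      _ ≤ 1 := by rw [hf]; linarith
  · simpa [hfΦ1] using (f.comp Φ).le_opNorm 1

theorem numRange_mul_apply_mul_subset {C : Type*} [NormedRing C] [NormedAlgebra ℂ C] {u v : C}
    (hvu : v * u = 1) (hu : ‖u‖ ≤ 1) (hv : ‖v‖ ≤ 1) (R : C →L[ℂ] C) :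
    numRange C (v * R u) ⊆ numRange (C →L[ℂ] C) R := by
  intro z hz
  have := nontrivial_of_mem_numRange hz
  let Φ : (C →L[ℂ] C) →L[ℂ] C :=
    (ContinuousLinearMap.mul ℂ C v).comp (ContinuousLinearMap.apply ℂ C u)
  have hΦ : ‖Φ‖ ≤ 1 := by
    calc ‖Φ‖ ≤ ‖ContinuousLinearMap.mul ℂ C v‖ * ‖ContinuousLinearMap.apply ℂ C u‖ :=
          ContinuousLinearMap.opNorm_comp_le _ _
      _ ≤ 1 * 1 := by
          gcongr
          · exact (ContinuousLinearMap.opNorm_mul_apply_le ℂ C v).trans hv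
          · refine ContinuousLinearMap.opNorm_le_bound _ zero_le_one fun S => ?_
            calc ‖S u‖ ≤ ‖S‖ * ‖u‖ := S.le_opNorm u
              _ ≤ 1 * ‖S‖ := by nlinarith [norm_nonneg S]
      _ = 1 := one_mul 1
  exact numRange_apply_subset Φ hΦ hvu R hz

theorem stmt10_general (E : Type*) [NormedAddCommGroup E] [NormedSpace ℂ E]
    -- the Calkin algebra `C = B(E)/K(E)`, presented abstractly as the image of a
    -- surjective algebra homomorphism `π` whose norm is the quotient (essential) norm
    (C : Type*) [NormedRing C] [NormedAlgebra ℂ C]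
    (π : (E →L[ℂ] E) →ₐ[ℂ] C)
    (k : ℕ) (A B : Fin k → (E →L[ℂ] E))
    (R : C →L[ℂ] C) (hR : ∀ x, R x = ∑ i, π (A i) * x * π (B i))
    (U : (E →L[ℂ] E)ˣ) (hU : ‖π (U : E →L[ℂ] E)‖ = 1)
    (hU' : ‖π ((U⁻¹ : (E →L[ℂ] E)ˣ) : E →L[ℂ] E)‖ = 1) :
    numRange C (π (∑ i, ((U⁻¹ : (E →L[ℂ] E)ˣ) : E →L[ℂ] E) * A i * (U : E →L[ℂ] E) * B i))
      ⊆ numRange (C →L[ℂ] C) R := by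
  have hinv : π ((U⁻¹ : (E →L[ℂ] E)ˣ) : E →L[ℂ] E) * π (U : E →L[ℂ] E) = 1 := by
    rw [← map_mul, Units.inv_mul, map_one]
  have hconj : π (∑ i, ((U⁻¹ : (E →L[ℂ] E)ˣ) : E →L[ℂ] E) * A i * (U : E →L[ℂ] E) * B i) =
      π ((U⁻¹ : (E →L[ℂ] E)ˣ) : E →L[ℂ] E) * R (π (U : E →L[ℂ] E)) := by
    simp only [hR, map_sum, map_mul, Finset.mul_sum, mul_assoc]
  rw [hconj]
  exact numRange_mul_apply_mul_subset hinv hU.le hU'.le R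

theorem stmt10 (E : Type*) [NormedAddCommGroup E] [NormedSpace ℂ E] [CompleteSpace E]
    -- the Calkin algebra `C = B(E)/K(E)`, presented abstractly as the image of a
    -- surjective algebra homomorphism `π` whose norm is the quotient (essential) norm
    (C : Type*) [NormedRing C] [NormedAlgebra ℂ C] [CompleteSpace C] [NormOneClass C]
    (π : (E →L[ℂ] E) →ₐ[ℂ] C) (hπ_surj : Function.Surjective π)
    (hπ_ker : ∀ T : E →L[ℂ] E, π T = 0 ↔ IsCompactOperator T)
    (hπ_norm : ∀ T : E →L[ℂ] E,
      ‖π T‖ = ⨅ K : {K : E →L[ℂ] E // IsCompactOperator K}, ‖T + (K : E →L[ℂ] E)‖)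
    (k : ℕ) (A B : Fin k → (E →L[ℂ] E))
    (R : C →L[ℂ] C) (hR : ∀ x, R x = ∑ i, π (A i) * x * π (B i))
    (U : (E →L[ℂ] E)ˣ) (hU : ‖π (U : E →L[ℂ] E)‖ = 1)
    (hU' : ‖π ((U⁻¹ : (E →L[ℂ] E)ˣ) : E →L[ℂ] E)‖ = 1) :
    numRange C (π (∑ i, ((U⁻¹ : (E →L[ℂ] E)ˣ) : E →L[ℂ] E) * A i * (U : E →L[ℂ] E) * B i))
      ⊆ numRange (C →L[ℂ] C) R :=
  stmt10_general E C π k A B R hR U hU hU'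
end

section
/- In a unital C*-algebra A, the closed unit ball of A is the closed convex hull of the set of unitary elements. -/
/-!
Russo–Dye, following Kadison–Pedersen. A selfadjoint contraction `a` is the midpoint of the
unitaries `a ± i√(1 - a²)`, hence, by the polar decomposition `b = w |b|`, so is every invertible
contraction `b`. If `‖a‖ < 1` and `u` is unitary, then `a + u = (1 + a u⋆) u` is invertible, so
`midpoint a u` lies in the convex hull of the unitaries. The map `x ↦ midpoint a x` therefore
preserves that hull and contracts towards `a`, so its iterates starting at `1` converge to `a`.
The closed unit ball is the closure of the open one.
-/

open Filter Topology

theorem mem_closure_convexHull_of_midpoint_mem {E : Type*} [NormedAddCommGroup E]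
    [NormedSpace ℝ E] {s : Set E} (hs : s.Nonempty) {a : E}
    (h : ∀ x ∈ s, midpoint ℝ a x ∈ convexHull ℝ s) : a ∈ closure (convexHull ℝ s) := by
  have hmaps : ∀ x ∈ convexHull ℝ s, midpoint ℝ a x ∈ convexHull ℝ s :=
    convexHull_min h ((convex_convexHull ℝ s).affine_preimage (AffineMap.homothety a (2⁻¹ : ℝ)))
  obtain ⟨x₀, hx₀⟩ := hs
  have hmem : ∀ n, (midpoint ℝ a)^[n] x₀ ∈ convexHull ℝ s := by
    intro n
    induction n with
    | zero => exact subset_convexHull ℝ s hx₀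
    | succ n ih => rw [Function.iterate_succ_apply']; exact hmaps _ ih
  have hdist : ∀ n, dist a ((midpoint ℝ a)^[n] x₀) = 2⁻¹ ^ n * dist a x₀ := by
    intro n
    induction n with
    | zero => simp
    | succ n ih =>
      rw [Function.iterate_succ_apply', dist_left_midpoint, ih, Real.norm_ofNat, pow_succ']
      ring
  have htends : Tendsto (fun n => (midpoint ℝ a)^[n] x₀) atTop (𝓝 a) := by
    rw [tendsto_iff_dist_tendsto_zero]
    simp_rw [dist_comm _ a, hdist]
    simpa using (tendsto_pow_atTop_nhds_zero_of_lt_one (r := (2⁻¹ : ℝ)) (by norm_num)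
      (by norm_num)).mul_const (dist a x₀)
  exact mem_closure_of_tendsto htends (Eventually.of_forall hmem)

section CStarAlgebra

variable {A : Type*} [CStarAlgebra A]

theorem IsSelfAdjoint.exists_mem_unitary_midpoint_star_eq {a : A} (ha : IsSelfAdjoint a)
    (ha_norm : ‖a‖ ≤ 1) : ∃ u ∈ unitary A, midpoint ℝ u (star u) = a := by
  let _ := CStarAlgebra.spectralOrder A
  let _ := CStarAlgebra.spectralOrderedRing A
  refine ⟨_, ha.self_add_I_smul_cfcSqrt_sub_sq_mem_unitary a ha_norm, ?_⟩
  have hsqrt : IsSelfAdjoint (CFC.sqrt (1 - a ^ 2)) := (CFC.sqrt_nonneg _).isSelfAdjoint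
  rw [star_add, star_smul, ha.star_eq, hsqrt.star_eq, Complex.star_def, Complex.conj_I,
    midpoint_eq_smul_add, invOf_eq_inv]
  module

theorem IsUnit.exists_mem_unitary_eq_mul_abs [PartialOrder A] [StarOrderedRing A] {a : A}
    (ha : IsUnit a) : ∃ w ∈ unitary A, a = w * CFC.abs a := by
  have habs : IsUnit (CFC.abs a) := by
    rw [← isUnit_mul_self_iff, CFC.abs_mul_abs]
    exact ha.star.mul ha
  set m := CFC.abs a
  refine ⟨a * ↑habs.unit⁻¹, ?_, by simp [mul_assoc]⟩
  have hm : star m = m := (CFC.abs_nonneg a).isSelfAdjoint.star_eq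
  refine (ha.mul habs.unit⁻¹.isUnit).mem_unitary_of_star_mul_self ?_
  calc star (a * ↑habs.unit⁻¹) * (a * ↑habs.unit⁻¹)
      = star (m * ↑habs.unit⁻¹) * (m * ↑habs.unit⁻¹) := by
        rw [star_mul, star_mul, hm, mul_assoc, ← mul_assoc (star a), ← CFC.abs_mul_abs a]
        simp only [mul_assoc, m]
    _ = 1 := by rw [habs.mul_val_inv, star_one, one_mul]

theorem IsUnit.exists_mem_unitary_midpoint_eq {a : A} (ha : IsUnit a) (ha_norm : ‖a‖ ≤ 1) :
    ∃ u ∈ unitary A, ∃ v ∈ unitary A, midpoint ℝ u v = a := by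
  let _ := CStarAlgebra.spectralOrder A
  let _ := CStarAlgebra.spectralOrderedRing A
  obtain ⟨w, hw, hwa⟩ := ha.exists_mem_unitary_eq_mul_abs
  obtain ⟨u, hu, hmid⟩ := (CFC.abs_nonneg a).isSelfAdjoint.exists_mem_unitary_midpoint_star_eq
    (CFC.norm_abs.trans_le ha_norm)
  refine ⟨w * u, mul_mem hw hu, w * star u, mul_mem hw (Unitary.star_mem hu), ?_⟩
  rw [hwa, ← hmid]
  exact ((LinearMap.mulLeft ℝ w).toAffineMap.map_midpoint u (star u)).symm

theorem norm_le_one_of_mem_unitary {u : A} (hu : u ∈ unitary A) : ‖u‖ ≤ 1 := by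
  obtain _ | _ := subsingleton_or_nontrivial A
  · simp [Subsingleton.elim u 0]
  · exact (CStarRing.norm_of_mem_unitary hu).le

theorem midpoint_mem_convexHull_unitary {a u : A} (ha : ‖a‖ < 1) (hu : u ∈ unitary A) :
    midpoint ℝ a u ∈ convexHull ℝ (unitary A : Set A) := by
  have hunit : IsUnit (a + u) := by
    have hfactor : a + u = (1 - -(a * star u)) * u := by
      rw [sub_neg_eq_add, add_mul, one_mul, mul_assoc, Unitary.star_mul_self_of_mem hu, mul_one,
        add_comm]
    have hone_sub : IsUnit (1 - -(a * star u)) := isUnit_one_sub_of_norm_lt_one <| by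
      rwa [norm_neg, CStarRing.norm_mul_mem_unitary a (Unitary.star_mem hu)]
    rw [hfactor]
    exact hone_sub.mul (Unitary.isUnit_coe (U := ⟨u, hu⟩))
  have hmid_unit : IsUnit (midpoint ℝ a u) := by
    rw [midpoint_eq_smul_add, invOf_eq_inv]
    simpa using hunit.smul (Units.mk0 (2⁻¹ : ℝ) (by norm_num))
  have hmid_norm : ‖midpoint ℝ a u‖ ≤ 1 := by
    rw [midpoint_eq_smul_add, invOf_eq_inv, norm_smul, Real.norm_of_nonneg (by norm_num)]
    linarith [norm_add_le a u, norm_le_one_of_mem_unitary hu]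
  obtain ⟨v, hv, w, hw, hvw⟩ := hmid_unit.exists_mem_unitary_midpoint_eq hmid_norm
  rw [← hvw]
  exact (convex_convexHull ℝ _).midpoint_mem (subset_convexHull ℝ _ hv) (subset_convexHull ℝ _ hw)

end CStarAlgebra

theorem stmt15_general (A : Type*) [NormedRing A] [StarRing A] [CStarRing A] [CompleteSpace A]
    [NormedAlgebra ℂ A] [StarModule ℂ A] :
    Metric.closedBall (0 : A) 1 =
      closure (convexHull ℝ ((unitary A : Set A))) := by
  let _ : CStarAlgebra A := {}
  refine le_antisymm ?_ ?_
  · rw [← closure_ball (0 : A) one_ne_zero, ← closure_closure (s := convexHull ℝ _)]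
    exact closure_mono fun a ha => mem_closure_convexHull_of_midpoint_mem ⟨1, one_mem _⟩
      fun u hu => midpoint_mem_convexHull_unitary (mem_ball_zero_iff.1 ha) hu
  · refine closure_minimal (convexHull_min (fun u hu => ?_) (convex_closedBall 0 1))
      Metric.isClosed_closedBall
    exact mem_closedBall_zero_iff.2 (norm_le_one_of_mem_unitary hu)

theorem stmt15 (A : Type*) [NormedRing A] [StarRing A] [CStarRing A] [CompleteSpace A]
    [NormedAlgebra ℂ A] [StarModule ℂ A] [NormOneClass A] :
    Metric.closedBall (0 : A) 1 =
      closure (convexHull ℝ ((unitary A : Set A))) :=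
  stmt15_general A
end

section
/- Let A be a unital C*-algebra and a = (a₁,...,a_k), b = (b₁,...,b_k) k-tuples in A. Then the set ∪_{u ∈ U} V(Σᵢ u*aᵢubᵢ, A) is contained in V(R_{a,b}, B(A)), and V(R_{a,b}, B(A)) is closed; hence the closure [∪_{u ∈ U} V(Σᵢ u*aᵢubᵢ, A)]⁻ is contained in V(R_{a,b}, B(A)). -/
open Metric in
lemma numRange_isClosed (E : Type*) [NormedRing E] [NormedAlgebra ℂ E] [NormOneClass E]
    (x : E) : IsClosed (numRange E x) := by
  have key : numRange E x =
      (fun f : WeakDual ℂ E => f x) ''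
        ((WeakDual.toStrongDual ⁻¹' closedBall 0 1) ∩ {f : WeakDual ℂ E | f 1 = 1}) := by
    ext z
    constructor
    · rintro ⟨f, hf1, hf2, hf3⟩
      exact ⟨StrongDual.toWeakDual f,
        ⟨by simp [mem_closedBall_zero_iff, hf1], hf2⟩, hf3⟩
    · rintro ⟨f, ⟨hb, h1⟩, hfx⟩
      refine ⟨WeakDual.toStrongDual f, le_antisymm (by simpa [mem_closedBall_zero_iff] using hb) ?_,
        h1, hfx⟩
      have := (WeakDual.toStrongDual f).le_opNorm 1
      rw [show WeakDual.toStrongDual f 1 = f 1 from rfl, h1] at this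
      simpa using this
  rw [key]
  have hcpt : IsCompact ((WeakDual.toStrongDual ⁻¹' closedBall 0 1) ∩
      {f : WeakDual ℂ E | f 1 = 1}) := by
    refine (WeakDual.isCompact_closedBall (𝕜 := ℂ) (E := E) 0 1).inter_right ?_
    exact isClosed_singleton.preimage (WeakDual.eval_continuous (1 : E))
  exact (hcpt.image (WeakDual.eval_continuous x)).isClosed

theorem stmt17 (A : Type*) [NormedRing A] [StarRing A] [CStarRing A] [CompleteSpace A]
    [NormedAlgebra ℂ A] [StarModule ℂ A] [NormOneClass A]
    (k : ℕ) (a b : Fin k → A) (R : A →L[ℂ] A)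
    (hR : ∀ x, R x = ∑ i, a i * x * b i) :
    (⋃ u : unitary A, numRange A (∑ i, star (u : A) * a i * (u : A) * b i))
        ⊆ numRange (A →L[ℂ] A) R ∧
      IsClosed (numRange (A →L[ℂ] A) R) ∧
      closure (⋃ u : unitary A, numRange A (∑ i, star (u : A) * a i * (u : A) * b i))
        ⊆ numRange (A →L[ℂ] A) R := by
  have hA : Nontrivial A := nontrivial_of_ne 1 0 (by
    intro h
    have := norm_one (α := A)
    rw [h, norm_zero] at this
    exact one_ne_zero this.symm)
  have hclosed : IsClosed (numRange (A →L[ℂ] A) R) := numRange_isClosed _ R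
  have hsub : (⋃ u : unitary A, numRange A (∑ i, star (u : A) * a i * (u : A) * b i))
      ⊆ numRange (A →L[ℂ] A) R := by
    rintro z hz
    rw [Set.mem_iUnion] at hz
    obtain ⟨u, f, hf1, hf2, hf3⟩ := hz
    have hu : ‖(u : A)‖ = 1 := CStarRing.norm_coe_unitary u
    have hus : ‖star (u : A)‖ = 1 := by rw [norm_star]; exact hu
    -- define the state F on B(A) by F T = f (u* * T u)
    let F : (A →L[ℂ] A) →L[ℂ] ℂ := LinearMap.mkContinuous
      { toFun := fun T => f (star (u : A) * T (u : A))
        map_add' := fun T S => by simp [mul_add]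
        map_smul' := fun c T => by simp }
      1 (by
        intro T
        calc ‖f (star (u : A) * T (u : A))‖ ≤ ‖f‖ * ‖star (u : A) * T (u : A)‖ :=
              f.le_opNorm _
          _ ≤ 1 * (‖star (u : A)‖ * (‖T‖ * ‖(u : A)‖)) := by
              gcongr
              · exact hf1.le
              · exact (norm_mul_le _ _).trans (by gcongr; exact T.le_opNorm _)
          _ = 1 * ‖T‖ := by rw [hus, hu]; ring)
    have hF1 : F 1 = 1 := by
      show f (star (u : A) * (1 : A →L[ℂ] A) (u : A)) = 1
      rw [ContinuousLinearMap.one_apply]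
      have : star (u : A) * (u : A) = 1 := Unitary.coe_star_mul_self u
      rw [this, hf2]
    have hFn : ‖F‖ = 1 := by
      refine le_antisymm (LinearMap.mkContinuous_norm_le _ zero_le_one _) ?_
      have h1 : ‖F 1‖ ≤ ‖F‖ * ‖(1 : A →L[ℂ] A)‖ := F.le_opNorm 1
      rw [hF1, norm_one, norm_one, mul_one] at h1
      exact h1
    refine ⟨F, hFn, hF1, ?_⟩
    show f (star (u : A) * R (u : A)) = z
    rw [hR, Finset.mul_sum]
    rw [← hf3]
    congr 1
    exact Finset.sum_congr rfl fun i _ => by simp [mul_assoc]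
  exact ⟨hsub, hclosed, hclosed.closure_subset_iff.mpr hsub⟩
end
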